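/- arXiv:1912.10185 — 5 statements merged into one kernel-verified Lean document; each statement's English description precedes it below -/
import Mathlib

section
/- Let X be a measurable space and let μ and ν be probability measures on X. Let m = (1/2)•(μ + ν) be the midpoint measure. Then the quantity KL(μ ‖ m) + KL(ν ‖ m) − log 4 (the value of the GAN adversarial objective at the optimal discriminator) is at least −log 4, and it equals −log 4 if and only if ν = μ. In particular, the global minimum over generator distributions ν of the adversarial loss is −log 4, attained exactly when the generator distribution equals the data distribution. -/
open MeasureTheory
open scoped ENNReal

/-- Kullback–Leibler divergence of `μ` with respect to `m`, as the integral of the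
logarithm of the Radon–Nikodym derivative (valid whenever `μ ≪ m`). -/
noncomputable def klDiv {X : Type*} [MeasurableSpace X] (μ m : Measure X) : ℝ :=
  ∫ x, Real.log ((μ.rnDeriv m) x).toReal ∂μ

/-! Both `μ` and `ν` are bounded by twice their midpoint `m`, so `dμ/dm` and `dν/dm` are bounded
by `2`; hence both divergences are finite, and Gibbs' inequality with its equality case
(`InformationTheory.klDiv_eq_zero_iff`) applies to each of them. -/

section Divergence

variable {X : Type*} [MeasurableSpace X] {μ ν : Measure X}

lemma MeasureTheory.Measure.rnDeriv_le_of_le_smul [SigmaFinite ν] {c : ℝ≥0∞} (h : μ ≤ c • ν) :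
    μ.rnDeriv ν ≤ᵐ[ν] fun _ ↦ c := by
  refine ae_le_of_forall_setLIntegral_le_of_sigmaFinite (μ.measurable_rnDeriv ν) fun s _ _ ↦ ?_
  rw [setLIntegral_const]
  exact (Measure.setLIntegral_rnDeriv_le s).trans (h s)

lemma integrable_llr_of_le_smul [IsFiniteMeasure μ] [IsFiniteMeasure ν] {c : ℝ≥0∞}
    (hc : c ≠ ∞) (h : μ ≤ c • ν) : Integrable (llr μ ν) μ := by
  have hμν : μ ≪ ν := Measure.absolutelyContinuous_of_le_smul h
  rw [← integrable_rnDeriv_mul_log_iff hμν]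
  obtain ⟨C, hC⟩ := isCompact_Icc.exists_bound_of_continuousOn
    (Real.continuous_mul_log.continuousOn (s := Set.Icc 0 c.toReal))
  refine Integrable.of_bound (by fun_prop) C ?_
  filter_upwards [Measure.rnDeriv_le_of_le_smul h] with x hx
  exact hC _ ⟨ENNReal.toReal_nonneg, ENNReal.toReal_mono hc hx⟩

lemma klDiv_eq_toReal_klDiv [IsFiniteMeasure μ] [IsFiniteMeasure ν] (hμν : μ ≪ ν)
    (h_univ : μ Set.univ = ν Set.univ) :
    klDiv μ ν = (InformationTheory.klDiv μ ν).toReal :=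
  (InformationTheory.toReal_klDiv_of_measure_eq hμν h_univ).symm

lemma klDiv_nonneg [IsFiniteMeasure μ] [IsFiniteMeasure ν] (hμν : μ ≪ ν)
    (h_univ : μ Set.univ = ν Set.univ) : 0 ≤ klDiv μ ν := by
  rw [klDiv_eq_toReal_klDiv hμν h_univ]
  exact ENNReal.toReal_nonneg

lemma klDiv_eq_zero_iff_of_le_smul [IsFiniteMeasure μ] [IsFiniteMeasure ν] {c : ℝ≥0∞}
    (hc : c ≠ ∞) (h : μ ≤ c • ν) (h_univ : μ Set.univ = ν Set.univ) :
    klDiv μ ν = 0 ↔ μ = ν := by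
  have hμν : μ ≪ ν := Measure.absolutelyContinuous_of_le_smul h
  have h_ne_top : InformationTheory.klDiv μ ν ≠ ∞ :=
    InformationTheory.klDiv_ne_top hμν (integrable_llr_of_le_smul hc h)
  rw [klDiv_eq_toReal_klDiv hμν h_univ, ENNReal.toReal_eq_zero_iff, or_iff_left h_ne_top,
    InformationTheory.klDiv_eq_zero_iff]

end Divergence

section Midpoint

variable {X : Type*} [MeasurableSpace X] (μ ν : Measure X)

lemma two_smul_half_smul : (2 : ℝ≥0∞) • (1 / 2 : ℝ≥0∞) • μ = μ := by
  rw [smul_smul, one_div, ENNReal.mul_inv_cancel two_ne_zero ENNReal.ofNat_ne_top, one_smul]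

lemma le_two_smul_half_smul_add : μ ≤ (2 : ℝ≥0∞) • (1 / 2 : ℝ≥0∞) • (μ + ν) := by
  rw [two_smul_half_smul]
  exact Measure.le_add_right le_rfl

instance isProbabilityMeasure_half_smul_add [IsProbabilityMeasure μ] [IsProbabilityMeasure ν] :
    IsProbabilityMeasure ((1 / 2 : ℝ≥0∞) • (μ + ν)) := by
  constructor
  simp only [Measure.smul_apply, Measure.add_apply, measure_univ, smul_eq_mul, one_div, mul_add,
    mul_one, ENNReal.inv_two_add_inv_two]

lemma half_smul_add_eq_self_iff [IsFiniteMeasure μ] : (1 / 2 : ℝ≥0∞) • (μ + ν) = μ ↔ ν = μ := by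
  constructor
  · intro h
    have h_sum : μ + ν = μ + μ := by
      rw [← two_smul ℝ≥0∞ μ, ← two_smul_half_smul (μ + ν), h]
    ext s
    exact (ENNReal.add_right_inj (measure_ne_top μ s)).mp (congrArg (· s) h_sum)
  · rintro rfl
    rw [← two_smul ℝ≥0∞, smul_smul, one_div,
      ENNReal.inv_mul_cancel two_ne_zero ENNReal.ofNat_ne_top, one_smul]

end Midpoint

/-- The GAN adversarial objective at the optimal discriminator,
`KL(μ ‖ m) + KL(ν ‖ m) − log 4` with `m = (1/2) • (μ + ν)`, is at least `−log 4`,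
with equality if and only if the generator distribution `ν` equals the data
distribution `μ`. -/
theorem adversarial_loss_global_minimum {X : Type*} [MeasurableSpace X]
    (μ ν : Measure X) [IsProbabilityMeasure μ] [IsProbabilityMeasure ν]
    (m : Measure X) (hm : m = (1/2 : ℝ≥0∞) • (μ + ν)) :
    -Real.log 4 ≤ klDiv μ m + klDiv ν m - Real.log 4 ∧
      (klDiv μ m + klDiv ν m - Real.log 4 = -Real.log 4 ↔ ν = μ) := by
  subst hm
  have hμ_le := le_two_smul_half_smul_add μ ν
  have hν_le : ν ≤ (2 : ℝ≥0∞) • (1 / 2 : ℝ≥0∞) • (μ + ν) := by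
    simpa only [add_comm ν μ] using le_two_smul_half_smul_add ν μ
  have hμ_univ : μ Set.univ = ((1 / 2 : ℝ≥0∞) • (μ + ν)) Set.univ := by simp only [measure_univ]
  have hν_univ : ν Set.univ = ((1 / 2 : ℝ≥0∞) • (μ + ν)) Set.univ := by simp only [measure_univ]
  have hμ_nonneg := klDiv_nonneg (Measure.absolutelyContinuous_of_le_smul hμ_le) hμ_univ
  have hν_nonneg := klDiv_nonneg (Measure.absolutelyContinuous_of_le_smul hν_le) hν_univ
  have hμ_zero : klDiv μ ((1 / 2 : ℝ≥0∞) • (μ + ν)) = 0 ↔ ν = μ :=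
    (klDiv_eq_zero_iff_of_le_smul ENNReal.ofNat_ne_top hμ_le hμ_univ).trans
      (eq_comm.trans (half_smul_add_eq_self_iff μ ν))
  have hν_zero : klDiv ν ((1 / 2 : ℝ≥0∞) • (μ + ν)) = 0 ↔ ν = μ := by
    rw [klDiv_eq_zero_iff_of_le_smul ENNReal.ofNat_ne_top hν_le hν_univ, eq_comm, add_comm,
      half_smul_add_eq_self_iff, eq_comm]
  refine ⟨by linarith, fun h ↦ hμ_zero.mp (by linarith), fun h ↦ ?_⟩
  rw [hμ_zero.mpr h, hν_zero.mpr h]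
  ring
end

section
/- Let X be a measurable space, let μ and ν be probability measures on X, and let D : X → ℝ be a measurable function with 0 < D(x) < 1 for all x. Assume log ∘ D is integrable with respect to μ and log ∘ (1 − D) is integrable with respect to ν. Then ∫ log(D) dμ + ∫ log(1 − D) dν ≤ ∫ log(dμ/d(μ+ν)) dμ + ∫ log(dν/d(μ+ν)) dν, where dμ/d(μ+ν) and dν/d(μ+ν) denote Radon–Nikodym derivatives with respect to the (finite) measure μ + ν. (The right-hand side integrals are finite: each integrand is nonpositive and each integral is at least −log 2.) -/
/-!
Write `f = dμ/d(μ+ν)` and `g = dν/d(μ+ν)`, so that `f + g = 1` almost everywhere. Both sides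
of the inequality are integrals against `μ + ν`: the objective is `∫ f log D + g log (1 - D)`,
the right-hand side is `∫ f log f + g log g`. The integrands compare pointwise by Gibbs'
inequality for the two-point distributions `(f, g)` and `(D, 1 - D)`.
-/

open MeasureTheory

namespace Real

lemma mul_log_le_mul_log_add_sub {a y : ℝ} (ha : 0 ≤ a) (hy : 0 < y) :
    a * log y ≤ a * log a + (y - a) := by
  rcases ha.eq_or_lt with rfl | ha
  · simpa using hy.le
  calc a * log y = a * log a + a * log (y / a) := by rw [log_div hy.ne' ha.ne']; ring
    _ ≤ a * log a + a * (y / a - 1) := by gcongr; exact log_le_sub_one_of_pos (by positivity)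
    _ = a * log a + (y - a) := by field_simp

lemma mul_log_add_mul_log_one_sub_le {a b y : ℝ} (ha : 0 ≤ a) (hb : 0 ≤ b) (hab : a + b = 1)
    (hy : y ∈ Set.Ioo 0 1) :
    a * log y + b * log (1 - y) ≤ a * log a + b * log b := by
  have h₁ := mul_log_le_mul_log_add_sub ha hy.1
  have h₂ := mul_log_le_mul_log_add_sub hb (sub_pos.mpr hy.2)
  linarith

end Real

section

variable {X : Type*} [MeasurableSpace X]

lemma integrable_mul_log_of_ae_mem_Icc {ρ : Measure X} [IsFiniteMeasure ρ] {h : X → ℝ}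
    (hm : AEStronglyMeasurable h ρ) (h01 : ∀ᵐ x ∂ρ, h x ∈ Set.Icc 0 1) :
    Integrable (fun x ↦ h x * Real.log (h x)) ρ := by
  refine Integrable.of_bound (C := 1) (Real.continuous_mul_log.comp_aestronglyMeasurable hm) ?_
  filter_upwards [h01] with x ⟨h0, h1⟩
  rw [Real.norm_eq_abs, abs_le]
  constructor
  · linarith [Real.self_sub_one_le_mul_log h0]
  · linarith [Real.mul_log_nonpos h0 h1]

variable (μ ν : Measure X) [SigmaFinite μ] [SigmaFinite ν]

lemma toReal_rnDeriv_add_toReal_rnDeriv :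
    ∀ᵐ x ∂(μ + ν), (μ.rnDeriv (μ + ν) x).toReal + (ν.rnDeriv (μ + ν) x).toReal = 1 := by
  filter_upwards [Measure.rnDeriv_add' μ ν (μ + ν), Measure.rnDeriv_self (μ + ν),
    Measure.rnDeriv_lt_top μ (μ + ν), Measure.rnDeriv_lt_top ν (μ + ν)]
    with x hadd hself hμ hν
  rw [← ENNReal.toReal_add hμ.ne hν.ne, ← Pi.add_apply, ← hadd, hself,
    ENNReal.toReal_one]

lemma toReal_rnDeriv_add_mem_Icc :
    ∀ᵐ x ∂(μ + ν), (μ.rnDeriv (μ + ν) x).toReal ∈ Set.Icc 0 1 := by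
  filter_upwards [toReal_rnDeriv_add_toReal_rnDeriv μ ν] with x hx
  exact ⟨ENNReal.toReal_nonneg, by linarith [(ν.rnDeriv (μ + ν) x).toReal_nonneg]⟩

lemma integrable_log_toReal_rnDeriv_add [IsFiniteMeasure μ] [IsFiniteMeasure ν] :
    Integrable (fun x ↦ Real.log (μ.rnDeriv (μ + ν) x).toReal) μ :=
  (integrable_toReal_rnDeriv_mul_iff ((Measure.AbsolutelyContinuous.refl μ).add_right ν)).mp <|
    integrable_mul_log_of_ae_mem_Icc
      (Measure.measurable_rnDeriv μ (μ + ν)).ennreal_toReal.aestronglyMeasurable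
      (toReal_rnDeriv_add_mem_Icc μ ν)

variable {μ ν}

lemma integrable_toReal_rnDeriv_add_mul_add {φ ψ : X → ℝ} (hφ : Integrable φ μ)
    (hψ : Integrable ψ ν) :
    Integrable (fun x ↦ (μ.rnDeriv (μ + ν) x).toReal * φ x
      + (ν.rnDeriv (μ + ν) x).toReal * ψ x) (μ + ν) :=
  ((integrable_toReal_rnDeriv_mul_iff ((Measure.AbsolutelyContinuous.refl μ).add_right ν)).mpr
    hφ).add
    ((integrable_toReal_rnDeriv_mul_iff ((Measure.AbsolutelyContinuous.refl ν).add_right' μ)).mpr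
      hψ)

lemma integral_add_integral_eq_integral_toReal_rnDeriv_add {φ ψ : X → ℝ}
    (hφ : Integrable φ μ) (hψ : Integrable ψ ν) :
    ∫ x, φ x ∂μ + ∫ x, ψ x ∂ν =
      ∫ x, (μ.rnDeriv (μ + ν) x).toReal * φ x
        + (ν.rnDeriv (μ + ν) x).toReal * ψ x ∂(μ + ν) := by
  have hμ := (Measure.AbsolutelyContinuous.refl μ).add_right ν
  have hν := (Measure.AbsolutelyContinuous.refl ν).add_right' μ
  rw [integral_add ((integrable_toReal_rnDeriv_mul_iff hμ).mpr hφ)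
    ((integrable_toReal_rnDeriv_mul_iff hν).mpr hψ), integral_toReal_rnDeriv_mul hμ,
    integral_toReal_rnDeriv_mul hν]

end

theorem adversarial_objective_le_optimal_discriminator_general {X : Type*} [MeasurableSpace X]
    (μ ν : Measure X) [IsProbabilityMeasure μ] [IsProbabilityMeasure ν]
    (D : X → ℝ) (hD01 : ∀ x, D x ∈ Set.Ioo (0 : ℝ) 1)
    (hint₁ : Integrable (fun x => Real.log (D x)) μ)
    (hint₂ : Integrable (fun x => Real.log (1 - D x)) ν) :
    (∫ x, Real.log (D x) ∂μ) + (∫ x, Real.log (1 - D x) ∂ν) ≤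
      (∫ x, Real.log ((μ.rnDeriv (μ + ν)) x).toReal ∂μ) +
        (∫ x, Real.log ((ν.rnDeriv (μ + ν)) x).toReal ∂ν) := by
  have hlog_f := integrable_log_toReal_rnDeriv_add μ ν
  have hlog_g : Integrable (fun x ↦ Real.log (ν.rnDeriv (μ + ν) x).toReal) ν := by
    rw [add_comm μ ν]; exact integrable_log_toReal_rnDeriv_add ν μ
  rw [integral_add_integral_eq_integral_toReal_rnDeriv_add hint₁ hint₂,
    integral_add_integral_eq_integral_toReal_rnDeriv_add hlog_f hlog_g]
  refine integral_mono_ae (integrable_toReal_rnDeriv_add_mul_add hint₁ hint₂)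
    (integrable_toReal_rnDeriv_add_mul_add hlog_f hlog_g) ?_
  filter_upwards [toReal_rnDeriv_add_toReal_rnDeriv μ ν] with x hx
  exact Real.mul_log_add_mul_log_one_sub_le ENNReal.toReal_nonneg ENNReal.toReal_nonneg hx
    (hD01 x)

/-- Optimal discriminator step: for probability measures `μ, ν` and any measurable
discriminator `D : X → ℝ` with values in `(0,1)`, with `log ∘ D` integrable w.r.t. `μ`
and `log ∘ (1 − D)` integrable w.r.t. `ν`, the adversarial objective
`∫ log D dμ + ∫ log (1 − D) dν` is at most the value obtained at the optimal
discriminator `D* = dμ/d(μ+ν)`, namely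
`∫ log (dμ/d(μ+ν)) dμ + ∫ log (dν/d(μ+ν)) dν`. -/
theorem adversarial_objective_le_optimal_discriminator {X : Type*} [MeasurableSpace X]
    (μ ν : Measure X) [IsProbabilityMeasure μ] [IsProbabilityMeasure ν]
    (D : X → ℝ) (hD : Measurable D) (hD01 : ∀ x, D x ∈ Set.Ioo (0 : ℝ) 1)
    (hint₁ : Integrable (fun x => Real.log (D x)) μ)
    (hint₂ : Integrable (fun x => Real.log (1 - D x)) ν) :
    (∫ x, Real.log (D x) ∂μ) + (∫ x, Real.log (1 - D x) ∂ν) ≤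
      (∫ x, Real.log ((μ.rnDeriv (μ + ν)) x).toReal ∂μ) +
        (∫ x, Real.log ((ν.rnDeriv (μ + ν)) x).toReal ∂ν) :=
  adversarial_objective_le_optimal_discriminator_general μ ν D hD01 hint₁ hint₂
end

section
/- Let X be a measurable space, let μ and ν be probability measures on X, and let m = (1/2)•(μ + ν). Then ∫ log(dμ/d(μ+ν)) dμ = KL(μ ‖ m) − log 2, where dμ/d(μ+ν) is the Radon–Nikodym derivative of μ with respect to μ + ν, and both sides are finite real numbers (indeed 0 ≤ KL(μ ‖ m) ≤ log 2). -/
/-!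
Since `μ ≤ μ + ν = 2 • m`, the density `dμ/dm` is at most `2`, so `llr μ m ≤ log 2` and
`llr μ m` is integrable (`t log t` is bounded on `[0, 2]`); Gibbs' inequality gives
`0 ≤ KL(μ ‖ m)`. Finally `dμ/dm = 2 · dμ/d(μ+ν)`, so the two log-likelihood ratios differ by
the constant `log 2`.
-/

open MeasureTheory
open scoped ENNReal

open Real

namespace MeasureTheory

variable {X : Type*} [MeasurableSpace X] {μ ν : Measure X} {c : ℝ≥0∞}

lemma Measure.rnDeriv_le_of_le_smul_s4 [SigmaFinite ν] (h : μ ≤ c • ν) :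
    μ.rnDeriv ν ≤ᵐ[ν] fun _ ↦ c := by
  refine ae_le_of_forall_setLIntegral_le_of_sigmaFinite (μ.measurable_rnDeriv ν) fun s _ _ ↦ ?_
  rw [setLIntegral_const]
  exact (Measure.setLIntegral_rnDeriv_le s).trans (h s)

lemma llr_le_log_of_le_smul [SigmaFinite μ] [SigmaFinite ν] (h : μ ≤ c • ν) (hc : c ≠ ∞) :
    ∀ᵐ x ∂μ, llr μ ν x ≤ log c.toReal := by
  have hμν : μ ≪ ν := Measure.absolutelyContinuous_of_le_smul h
  filter_upwards [hμν.ae_le (Measure.rnDeriv_le_of_le_smul_s4 h), Measure.rnDeriv_pos hμν,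
    hμν.ae_le (Measure.rnDeriv_lt_top μ ν)] with x hx_le hx_pos hx_lt_top
  exact log_le_log (ENNReal.toReal_pos hx_pos.ne' hx_lt_top.ne) (ENNReal.toReal_mono hc hx_le)

lemma integrable_llr_of_le_smul [IsFiniteMeasure μ] [IsFiniteMeasure ν] (h : μ ≤ c • ν)
    (hc : c ≠ ∞) : Integrable (llr μ ν) μ := by
  have hμν : μ ≪ ν := Measure.absolutelyContinuous_of_le_smul h
  rw [← integrable_rnDeriv_mul_log_iff hμν]
  obtain ⟨C, hC⟩ := isCompact_Icc.exists_bound_of_continuousOn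
    (s := Set.Icc 0 c.toReal) continuous_mul_log.continuousOn
  refine Integrable.mono' (integrable_const C) (by fun_prop) ?_
  filter_upwards [Measure.rnDeriv_le_of_le_smul_s4 h] with x hx
  exact hC _ ⟨ENNReal.toReal_nonneg, ENNReal.toReal_mono hc hx⟩

lemma integral_llr_le_log_of_le_smul [IsProbabilityMeasure μ] [IsFiniteMeasure ν]
    (h : μ ≤ c • ν) (hc : c ≠ ∞) : ∫ x, llr μ ν x ∂μ ≤ log c.toReal := by
  simpa using integral_mono_ae (integrable_llr_of_le_smul h hc) (integrable_const _)
    (llr_le_log_of_le_smul h hc)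

lemma integral_llr_nonneg [IsProbabilityMeasure μ] [IsProbabilityMeasure ν] (hμν : μ ≪ ν)
    (h_int : Integrable (llr μ ν) μ) : 0 ≤ ∫ x, llr μ ν x ∂μ := by
  simpa using InformationTheory.integral_llr_add_sub_measure_univ_nonneg hμν h_int

lemma le_two_smul_midpoint (μ ν : Measure X) : μ ≤ (2 : ℝ≥0∞) • ((1/2 : ℝ≥0∞) • (μ + ν)) := by
  rw [smul_smul, ENNReal.mul_div_cancel two_ne_zero ENNReal.ofNat_ne_top, one_smul]
  exact Measure.le_add_right le_rfl

instance isProbabilityMeasure_midpoint [IsProbabilityMeasure μ] [IsProbabilityMeasure ν] :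
    IsProbabilityMeasure ((1/2 : ℝ≥0∞) • (μ + ν)) := by
  constructor
  simp [ENNReal.inv_two_add_inv_two]

lemma llr_add_ae_eq_llr_midpoint_sub_log_two [IsFiniteMeasure μ] [SigmaFinite ν] :
    llr μ (μ + ν) =ᵐ[μ] fun x ↦ llr μ ((1/2 : ℝ≥0∞) • (μ + ν)) x - log 2 := by
  filter_upwards [llr_smul_right (Measure.AbsolutelyContinuous.rfl.add_right ν) (1/2 : ℝ≥0∞)
    (by simp) (by simp)] with x hx
  rw [hx, one_div, ENNReal.toReal_inv, log_inv]
  norm_num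

end MeasureTheory

/-- For probability measures `μ, ν` and the midpoint measure `m = (1/2) • (μ + ν)`,
`∫ log (dμ/d(μ+ν)) dμ = KL(μ ‖ m) − log 2`, and moreover `0 ≤ KL(μ ‖ m) ≤ log 2`. -/
theorem integral_log_rnDeriv_eq_klDiv_midpoint_sub_log_two {X : Type*} [MeasurableSpace X]
    (μ ν : Measure X) [IsProbabilityMeasure μ] [IsProbabilityMeasure ν]
    (m : Measure X) (hm : m = (1/2 : ℝ≥0∞) • (μ + ν)) :
    (∫ x, Real.log ((μ.rnDeriv (μ + ν)) x).toReal ∂μ) = klDiv μ m - Real.log 2 ∧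
      0 ≤ klDiv μ m ∧ klDiv μ m ≤ Real.log 2 := by
  subst hm
  have h_le := le_two_smul_midpoint μ ν
  have h_int := integrable_llr_of_le_smul h_le ENNReal.ofNat_ne_top
  refine ⟨?_, integral_llr_nonneg (Measure.absolutelyContinuous_of_le_smul h_le) h_int,
    (integral_llr_le_log_of_le_smul h_le ENNReal.ofNat_ne_top).trans_eq (by simp)⟩
  change ∫ x, llr μ (μ + ν) x ∂μ = ∫ x, llr μ _ x ∂μ - log 2
  rw [integral_congr_ae llr_add_ae_eq_llr_midpoint_sub_log_two,
    integral_sub h_int (integrable_const _)]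
  simp
end

section
/- Let X be a measurable space, let μ and ν be probability measures on X, and let m = (1/2)•(μ + ν). Then ∫ log(dμ/d(μ+ν)) dμ + ∫ log(dν/d(μ+ν)) dν = KL(μ ‖ m) + KL(ν ‖ m) − log 4, where dμ/d(μ+ν) and dν/d(μ+ν) denote Radon–Nikodym derivatives with respect to μ + ν and all quantities are finite. -/
open MeasureTheory
open scoped ENNReal

lemma abs_mul_log_le_one {t : ℝ} (h0 : 0 ≤ t) (h1 : t ≤ 1) : |t * Real.log t| ≤ 1 := by
  rw [abs_of_nonpos (Real.mul_log_nonpos h0 h1)]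
  linarith [Real.self_sub_one_le_mul_log h0]

section

variable {X : Type*} [MeasurableSpace X] {μ ρ : Measure X}

lemma integrable_llr_of_le [IsFiniteMeasure ρ] (hμρ : μ ≤ ρ) : Integrable (llr μ ρ) μ := by
  have : IsFiniteMeasure μ := isFiniteMeasure_of_le ρ hμρ
  rw [← integrable_rnDeriv_mul_log_iff (Measure.absolutelyContinuous_of_le hμρ)]
  refine Integrable.of_bound (by fun_prop) 1 ?_
  filter_upwards [Measure.rnDeriv_le_one_of_le hμρ] with x hx
  exact abs_mul_log_le_one ENNReal.toReal_nonneg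
    (ENNReal.toReal_le_of_le_ofReal zero_le_one (by simpa using hx))

lemma klDiv_smul_right [IsProbabilityMeasure μ] [SigmaFinite ρ] (hμρ : μ ≪ ρ)
    (h_int : Integrable (llr μ ρ) μ) {c : ℝ≥0∞} (hc : c ≠ 0) (hc_top : c ≠ ∞) :
    klDiv μ (c • ρ) = ∫ x, llr μ ρ x ∂μ - Real.log c.toReal := by
  rw [klDiv, ← llr_def, integral_congr_ae (llr_smul_right hμρ c hc hc_top),
    integral_sub h_int (integrable_const _), integral_const, probReal_univ, one_smul]

end

/-- Decomposition of the adversarial objective at the optimal discriminator: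
`∫ log (dμ/d(μ+ν)) dμ + ∫ log (dν/d(μ+ν)) dν = KL(μ ‖ m) + KL(ν ‖ m) − log 4`
where `m = (1/2) • (μ + ν)`. -/
theorem optimal_adversarial_objective_eq_klDiv_midpoint {X : Type*} [MeasurableSpace X]
    (μ ν : Measure X) [IsProbabilityMeasure μ] [IsProbabilityMeasure ν]
    (m : Measure X) (hm : m = (1/2 : ℝ≥0∞) • (μ + ν)) :
    (∫ x, Real.log ((μ.rnDeriv (μ + ν)) x).toReal ∂μ) +
        (∫ x, Real.log ((ν.rnDeriv (μ + ν)) x).toReal ∂ν) =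
      klDiv μ m + klDiv ν m - Real.log 4 := by
  have hμ : μ ≤ μ + ν := Measure.le_add_right le_rfl
  have hν : ν ≤ μ + ν := Measure.le_add_left le_rfl
  rw [hm, klDiv_smul_right (Measure.absolutelyContinuous_of_le hμ) (integrable_llr_of_le hμ)
      (by simp) (by simp),
    klDiv_smul_right (Measure.absolutelyContinuous_of_le hν) (integrable_llr_of_le hν)
      (by simp) (by simp)]
  have hlog : Real.log 4 = 2 * Real.log 2 := by
    rw [show (4 : ℝ) = 2 ^ 2 by norm_num, Real.log_pow, Nat.cast_ofNat]
  simp only [llr_def, one_div, ENNReal.toReal_inv, ENNReal.toReal_ofNat, Real.log_inv, hlog]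
  ring
end

section
/- Let E be a real inner product space, let x ∈ E, let k ≥ 2 and let Ψ : Fin k → (E → ℝ) be a family of logit functions, each differentiable at x. Let i* ∈ Fin k satisfy Ψ_{i*}(x) ≥ Ψ_j(x) for all j, and let j* ≠ i* satisfy Ψ_{j*}(x) ≥ Ψ_j(x) for all j ≠ i*. For each j ≠ i*, let g_j = ∇(Ψ_{i*} − Ψ_j)(x) denote the gradient at x, and assume g_j ≠ 0 for all j ≠ i*. Define the linearized robustness ρ(x) = min_{j ≠ i*} (Ψ_{i*}(x) − Ψ_j(x))/‖g_j‖, write g = g_{j*}, and define the alignment α(x) = |⟨x, g⟩|/‖g‖. If C ≥ 0 satisfies |(Ψ_{i*}(x) − Ψ_{j*}(x)) − ⟨g, x⟩| ≤ C, then ρ(x) ≤ α(x) + C/‖g‖. -/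
open scoped RealInnerProductSpace Gradient

theorem linearized_robustness_bound_general {E : Type*} [NormedAddCommGroup E]
    [InnerProductSpace ℝ E]
    (x : E) (k : ℕ) (Ψ : Fin k → E → ℝ)
    (istar jstar : Fin k) (hne : jstar ≠ istar)
    (g : Fin k → E)
    (C : ℝ)
    (hlin : |(Ψ istar x - Ψ jstar x) - ⟪g jstar, x⟫| ≤ C) :
    (⨅ j : {j : Fin k // j ≠ istar}, (Ψ istar x - Ψ j.1 x) / ‖g j.1‖) ≤
      |⟪x, g jstar⟫| / ‖g jstar‖ + C / ‖g jstar‖ := by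
  have hmargin : Ψ istar x - Ψ jstar x ≤ |⟪x, g jstar⟫| + C := by
    have := le_of_abs_le hlin
    linarith [le_abs_self ⟪x, g jstar⟫, real_inner_comm x (g jstar)]
  calc (⨅ j : {j : Fin k // j ≠ istar}, (Ψ istar x - Ψ j.1 x) / ‖g j.1‖)
      ≤ (Ψ istar x - Ψ jstar x) / ‖g jstar‖ :=
        Finite.ciInf_le _ (⟨jstar, hne⟩ : {j : Fin k // j ≠ istar})
    _ ≤ (|⟪x, g jstar⟫| + C) / ‖g jstar‖ := by gcongr
    _ = |⟪x, g jstar⟫| / ‖g jstar‖ + C / ‖g jstar‖ := add_div _ _ _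

/-- Linearized robustness bound (Theorem 2, Etmann et al.): for a classifier with logits
`Ψ j` differentiable at `x`, top class `istar`, runner-up class `jstar`, gradients
`g j = ∇(Ψ istar − Ψ j)(x)` all nonzero for `j ≠ istar`, and a constant `C ≥ 0` with
`|(Ψ istar x − Ψ jstar x) − ⟪g jstar, x⟫| ≤ C`, the linearized robustness
`ρ(x) = min_{j ≠ istar} (Ψ istar x − Ψ j x)/‖g j‖` satisfies
`ρ(x) ≤ α(x) + C/‖g jstar‖` where `α(x) = |⟪x, g jstar⟫|/‖g jstar‖`. -/
theorem linearized_robustness_bound {E : Type*} [NormedAddCommGroup E]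
    [InnerProductSpace ℝ E] [CompleteSpace E]
    (x : E) (k : ℕ) (hk : 2 ≤ k) (Ψ : Fin k → E → ℝ)
    (hdiff : ∀ j, DifferentiableAt ℝ (Ψ j) x)
    (istar jstar : Fin k) (hne : jstar ≠ istar)
    (htop : ∀ j, Ψ j x ≤ Ψ istar x)
    (hsecond : ∀ j, j ≠ istar → Ψ j x ≤ Ψ jstar x)
    (g : Fin k → E) (hgdef : ∀ j, g j = ∇ (fun y => Ψ istar y - Ψ j y) x)
    (hg0 : ∀ j, j ≠ istar → g j ≠ 0)
    (C : ℝ) (hC : 0 ≤ C)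
    (hlin : |(Ψ istar x - Ψ jstar x) - ⟪g jstar, x⟫| ≤ C) :
    (⨅ j : {j : Fin k // j ≠ istar}, (Ψ istar x - Ψ j.1 x) / ‖g j.1‖) ≤
      |⟪x, g jstar⟫| / ‖g jstar‖ + C / ‖g jstar‖ :=
  linearized_robustness_bound_general x k Ψ istar jstar hne g C hlin
end
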